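/- arXiv:hep-th/9612148 — 5 statements merged into one kernel-verified Lean document; each statement's English description precedes it below -/
import Mathlib

section
/- For the root system A_n, flipping the sign of the k-th simple root gives the recursion: T_{A_n}({(-1)^{δ_{i,k}} ε_i}) = - T_{A_n}({ε_i}) + 2 T_{A_{k-1}}({ε_1,...,ε_{k-1}}) + 2 T_{A_{n-k}}({ε_{k+1},...,ε_n}), where T_{A_m}({ε}) = Σ_{1≤i≤j≤m} ε_i ⋯ ε_j and T_{A_0} = 0. -/
/-!
Flipping `ε_k` negates exactly the terms of the intervals `[i, j]` containing `k`, so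
`T(flipped) = -T + 2 ∑_{k ∉ [i, j]} ε_i ⋯ ε_j`. An interval avoiding `k` lies either in
`[1, k - 1]` or in `[k + 1, n]`, and these two families give `T_{A_{k-1}}` and `T_{A_{n-k}}`.
-/

open Finset

/-- `TA n ε = ∑_{0 ≤ i ≤ j < n} ε i ⋯ ε j`, the sign-sum over positive roots
of `A_n` (simple roots indexed `0, …, n-1`, i.e. `ε l` is the sign `ε_{l+1}`). -/
def TA (n : ℕ) (ε : ℕ → ℤ) : ℤ :=
  ∑ i ∈ Finset.range n, ∑ j ∈ Finset.Ico i n, ∏ l ∈ Finset.Icc i j, ε l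

theorem Finset.prod_ite_eq_neg {ι R : Type*} [CommRing R] [DecidableEq ι]
    (s : Finset ι) (f : ι → R) (m : ι) :
    ∏ l ∈ s, (if l = m then -f l else f l) = (if m ∈ s then -1 else 1) * ∏ l ∈ s, f l := by
  have factor : ∀ l ∈ s, (if l = m then -f l else f l) = (if l = m then -1 else 1) * f l := by
    intro l _
    split_ifs <;> ring
  rw [prod_congr rfl factor, prod_mul_distrib, prod_ite_eq' s m fun _ => (-1 : R)]

theorem sum_intervals_not_mem {M : Type*} [AddCommMonoid M] (g : ℕ → ℕ → M) {m n : ℕ}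
    (hmn : m < n) :
    ∑ i ∈ range n, ∑ j ∈ Ico i n, (if m ∈ Icc i j then 0 else g i j) =
      ∑ i ∈ range m, ∑ j ∈ Ico i m, g i j + ∑ i ∈ Ico (m + 1) n, ∑ j ∈ Ico i n, g i j := by
  rw [← sum_range_add_sum_Ico _ hmn, sum_range_succ]
  have left : ∀ i ∈ range m, ∑ j ∈ Ico i n, (if m ∈ Icc i j then 0 else g i j) =
      ∑ j ∈ Ico i m, g i j := by
    intro i hi
    have him : i ≤ m := (mem_range.1 hi).le
    rw [← sum_Ico_consecutive _ him hmn.le]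
    have below : ∑ j ∈ Ico i m, (if m ∈ Icc i j then 0 else g i j) = ∑ j ∈ Ico i m, g i j :=
      sum_congr rfl fun j hj => if_neg (by simp only [mem_Icc, mem_Ico] at hj ⊢; omega)
    have above : ∑ j ∈ Ico m n, (if m ∈ Icc i j then 0 else g i j) = 0 :=
      sum_eq_zero fun j hj => if_pos (by simp only [mem_Icc, mem_Ico] at hj ⊢; omega)
    rw [below, above, add_zero]
  have at_m : ∑ j ∈ Ico m n, (if m ∈ Icc m j then 0 else g m j) = 0 :=
    sum_eq_zero fun j hj => if_pos (by simp only [mem_Icc, mem_Ico] at hj ⊢; omega)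
  have right : ∀ i ∈ Ico (m + 1) n, ∑ j ∈ Ico i n, (if m ∈ Icc i j then 0 else g i j) =
      ∑ j ∈ Ico i n, g i j := by
    intro i hi
    refine sum_congr rfl fun j _ => if_neg ?_
    simp only [mem_Icc, mem_Ico] at hi ⊢
    omega
  rw [sum_congr rfl left, at_m, add_zero, sum_congr rfl right]

theorem TA_shift (ε : ℕ → ℤ) (k r : ℕ) :
    TA r (fun i => ε (i + k)) =
      ∑ i ∈ Ico k (r + k), ∑ j ∈ Ico i (r + k), ∏ l ∈ Icc i j, ε l := by
  have outer := sum_Ico_add' (fun i => ∑ j ∈ Ico i (r + k), ∏ l ∈ Icc i j, ε l) 0 r k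
  rw [zero_add] at outer
  rw [← outer, TA, range_eq_Ico]
  refine sum_congr rfl fun i _ => ?_
  rw [← sum_Ico_add']
  refine sum_congr rfl fun j _ => ?_
  rw [← map_add_right_Icc, prod_map]
  rfl

theorem TA_flip (n m : ℕ) (ε : ℕ → ℤ) :
    TA n (fun i => if i = m then -ε i else ε i) =
      -TA n ε + 2 * ∑ i ∈ range n, ∑ j ∈ Ico i n,
        (if m ∈ Icc i j then 0 else ∏ l ∈ Icc i j, ε l) := by
  have term : ∀ i j, ∏ l ∈ Icc i j, (if l = m then -ε l else ε l) =
      -∏ l ∈ Icc i j, ε l + 2 * (if m ∈ Icc i j then 0 else ∏ l ∈ Icc i j, ε l) := by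
    intro i j
    rw [prod_ite_eq_neg]
    split_ifs <;> ring
  simp only [TA, term, sum_add_distrib, sum_neg_distrib, mul_sum]

theorem stmt9_general (n k : ℕ) (hk1 : 1 ≤ k) (hkn : k ≤ n)
    (ε : ℕ → ℤ) :
    TA n (fun i => if i = k - 1 then -ε i else ε i) =
      - TA n ε + 2 * TA (k - 1) ε + 2 * TA (n - k) (fun i => ε (i + k)) := by
  have hk : k - 1 + 1 = k := Nat.sub_add_cancel hk1
  rw [TA_flip, sum_intervals_not_mem _ (by omega), hk, TA_shift, Nat.sub_add_cancel hkn]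
  unfold TA
  ring

/-- Flipping the sign of the `k`-th simple root (`1 ≤ k ≤ n`, i.e. index `k-1`):
`T_{A_n}({(-1)^{δ_{i,k}} ε_i}) = -T_{A_n}({ε_i}) + 2 T_{A_{k-1}}({ε_1,…,ε_{k-1}})
+ 2 T_{A_{n-k}}({ε_{k+1},…,ε_n})`. -/
theorem stmt9 (n k : ℕ) (hk1 : 1 ≤ k) (hkn : k ≤ n)
    (ε : ℕ → ℤ) (hε : ∀ l, l < n → ε l = 1 ∨ ε l = -1) :
    TA n (fun i => if i = k - 1 then -ε i else ε i) =
      - TA n ε + 2 * TA (k - 1) ε + 2 * TA (n - k) (fun i => ε (i + k)) :=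
  stmt9_general n k hk1 hkn ε
end

section
/- In the setting of the D_n root system (positive roots: e_i ± e_j for i < j, expressed in simple roots α_1,...,α_n), the sign-sum satisfies T_{D_n}({ε_i}) = (1 + ε_{n-1} ε_n) · T_{A_{n-1}}({ε_1,...,ε_{n-1}}). In particular if ε_{n-1} ε_n = -1 then T_{D_n} = 0. -/
/-- The sign-sum `T_{D_n}({ε_i}) = ∑_{α ∈ Δ₊(D_n)} ∏_i ε_i^{m_i(α)}` over the
positive roots of `D_n`, written in terms of the simple roots
`α_1, …, α_n` (0-indexed here as `0, …, n-1`, with `n-2` and `n-1` the two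
fork nodes `α_{n-1} = e_{n-1} - e_n`, `α_n = e_{n-1} + e_n`):
* `e_i - e_j = α_i + ⋯ + α_{j-1}` for `i < j ≤ n`;
* `e_i + e_n = α_i + ⋯ + α_{n-2} + α_n` for `i ≤ n-1`;
* `e_i + e_j = α_i + ⋯ + α_{j-1} + 2(α_j + ⋯ + α_{n-2}) + α_{n-1} + α_n`
  for `i < j ≤ n-1`. -/
def TD (n : ℕ) (ε : ℕ → ℤ) : ℤ :=
  (∑ i ∈ Finset.range n, ∑ j ∈ Finset.Ico (i + 1) n,
      ∏ l ∈ Finset.Icc i (j - 1), ε l) +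
  (∑ i ∈ Finset.range (n - 1),
      (∏ l ∈ Finset.Ico i (n - 2), ε l) * ε (n - 1)) +
  (∑ i ∈ Finset.range (n - 1), ∑ j ∈ Finset.Ico (i + 1) (n - 1),
      (∏ l ∈ Finset.Icc i (j - 1), ε l) * (∏ l ∈ Finset.Ico j (n - 2), ε l) ^ 2
        * ε (n - 2) * ε (n - 1))

/-! The roots `e_i - e_j` of `D_n` are the positive roots of its `A_{n-1}` subdiagram and
contribute `T_{A_{n-1}}`. Send `e_i + e_j` (`i < j ≤ n`) to `e_i - e_j`: for `j < n` the two
differ by `2(α_j + ⋯ + α_{n-2}) + α_{n-1} + α_n`, and `e_i + e_n - (e_i - e_n)` is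
`α_n - α_{n-1} ≡ α_{n-1} + α_n` modulo `2α_{n-1}`. Since `ε_l² = 1`, each `e_i + e_j` therefore
carries `ε_{n-1} ε_n` times the sign of `e_i - e_j`. -/

open Finset

theorem sum_Ico_succ_sub_one {M : Type*} [AddCommMonoid M] (g : ℕ → M) (i k : ℕ) :
    ∑ j ∈ Ico (i + 1) k, g (j - 1) = ∑ j ∈ Ico i (k - 1), g j := by
  cases k with
  | zero => simp
  | succ k => exact sum_Ico_add_right_sub_eq i k 1

theorem sum_range_sum_Ico_succ_prod_Icc_eq_TA (n : ℕ) (ε : ℕ → ℤ) :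
    ∑ i ∈ range n, ∑ j ∈ Ico (i + 1) n, ∏ l ∈ Icc i (j - 1), ε l = TA (n - 1) ε := by
  have hrow : ∀ i, ∑ j ∈ Ico (i + 1) n, ∏ l ∈ Icc i (j - 1), ε l =
      ∑ j ∈ Ico i (n - 1), ∏ l ∈ Icc i j, ε l :=
    fun i => sum_Ico_succ_sub_one (fun j => ∏ l ∈ Icc i j, ε l) i n
  simp only [hrow, TA]
  refine (sum_subset (range_subset_range.mpr (Nat.sub_le n 1)) fun i _ hi => ?_).symm
  rw [Ico_eq_empty_of_le (by simpa using hi), sum_empty]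

theorem fork_row_sum_eq {m i : ℕ} {ε : ℕ → ℤ} (hε : ∀ l ≤ m, ε l ^ 2 = 1) (hi : i ≤ m) :
    (∏ l ∈ Ico i m, ε l) * ε (m + 1) +
        ∑ j ∈ Ico (i + 1) (m + 1),
          (∏ l ∈ Icc i (j - 1), ε l) * (∏ l ∈ Ico j m, ε l) ^ 2 * ε m * ε (m + 1) =
      ε m * ε (m + 1) * ∑ j ∈ Ico i (m + 1), ∏ l ∈ Icc i j, ε l := by
  have hsq : ∀ j, (∏ l ∈ Ico j m, ε l) ^ 2 = 1 := fun j => by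
    rw [← prod_pow]
    exact prod_eq_one fun l hl => hε l (mem_Ico.mp hl).2.le
  simp only [hsq, mul_one]
  rw [sum_Ico_succ_sub_one (fun j => (∏ l ∈ Icc i j, ε l) * ε m * ε (m + 1)),
    Nat.add_sub_cancel, sum_Ico_succ_top hi, ← Ico_add_one_right_eq_Icc, prod_Ico_succ_top hi,
    ← sum_mul, ← sum_mul]
  linear_combination (-(ε (m + 1) * ∏ l ∈ Ico i m, ε l)) * hε m le_rfl

theorem TD_add_two_eq {m : ℕ} {ε : ℕ → ℤ} (hε : ∀ l ≤ m, ε l ^ 2 = 1) :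
    TD (m + 2) ε = (1 + ε m * ε (m + 1)) * TA (m + 1) ε := by
  have hfork := sum_congr rfl fun i hi =>
    fork_row_sum_eq hε (Nat.lt_succ_iff.mp (mem_range.mp hi))
  rw [TD, sum_range_sum_Ico_succ_prod_Icc_eq_TA, add_assoc, ← sum_add_distrib,
    show m + 2 - 1 = m + 1 from rfl, show m + 2 - 2 = m from rfl, hfork, ← mul_sum, ← TA]
  ring

/-- For the root system `D_n`:
`T_{D_n}({ε_i}) = (1 + ε_{n-1} ε_n) T_{A_{n-1}}({ε_1,…,ε_{n-1}})`;
in particular `T_{D_n} = 0` when `ε_{n-1} ε_n = -1`. -/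
theorem stmt12 (n : ℕ) (hn : 2 ≤ n) (ε : ℕ → ℤ)
    (hε : ∀ l, l < n → ε l = 1 ∨ ε l = -1) :
    TD n ε = (1 + ε (n - 2) * ε (n - 1)) * TA (n - 1) ε ∧
    (ε (n - 2) * ε (n - 1) = -1 → TD n ε = 0) := by
  obtain ⟨m, rfl⟩ : ∃ m, n = m + 2 := ⟨n - 2, by omega⟩
  have hsq : ∀ l ≤ m, ε l ^ 2 = 1 := fun l hl => by
    rcases hε l (by omega) with h | h <;> simp [h]
  have hTD := TD_add_two_eq hsq
  show _ = (1 + ε m * ε (m + 1)) * _ ∧ (ε m * ε (m + 1) = -1 → _)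
  exact ⟨hTD, fun h => by rw [hTD, h]; ring⟩
end

section
/- For the root system B_n with standard simple roots, T_{B_n}({ε_i}) = T_{A_n}({ε_i}) + T_{A_{n-1}}({ε_1,...,ε_{n-1}}), where T_{A_m}({ε}) = Σ_{1≤i≤j≤m} ε_i⋯ε_j and T_{B_n}({ε_i}) = Σ_{α∈Δ_+(B_n)} Π_i ε_i^{m_i(α)}. -/
/-- The sign-sum `T_{B_n}({ε_i}) = ∑_{α ∈ Δ₊(B_n)} ∏_i ε_i^{m_i(α)}` over the
positive roots of `B_n` in terms of the simple roots `α_1, …, α_n`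
(0-indexed as `0, …, n-1`, `α_n` the short root):
the positive roots are `α_i + ⋯ + α_j` for `i ≤ j ≤ n` and
`α_i + ⋯ + α_{j-1} + 2(α_j + ⋯ + α_n)` for `i < j ≤ n`. -/
def TB (n : ℕ) (ε : ℕ → ℤ) : ℤ :=
  TA n ε +
  ∑ i ∈ Finset.range n, ∑ j ∈ Finset.Ico (i + 1) n,
    (∏ l ∈ Finset.Icc i (j - 1), ε l) * (∏ l ∈ Finset.Icc j (n - 1), ε l) ^ 2

open Finset

theorem Finset.prod_sq_eq_one {ι M : Type*} [CommMonoid M] {s : Finset ι} {f : ι → M}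
    (h : ∀ i ∈ s, f i ^ 2 = 1) : (∏ i ∈ s, f i) ^ 2 = 1 := by
  rw [← prod_pow]
  exact prod_eq_one h

/-- The long roots `α_i + ⋯ + α_{j-1} + 2(α_j + ⋯ + α_n)` with the doubled tail erased
are exactly the positive roots of `A_{n-1}`. -/
theorem TA_pred_eq_sum_Ico_succ (n : ℕ) (ε : ℕ → ℤ) :
    TA (n - 1) ε = ∑ i ∈ range n, ∑ j ∈ Ico (i + 1) n, ∏ l ∈ Icc i (j - 1), ε l := by
  cases n with
  | zero => simp [TA]
  | succ m =>
    rw [sum_range_succ, Ico_self, sum_empty, add_zero, TA, Nat.add_sub_cancel]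
    refine sum_congr rfl fun i _ => ?_
    rw [← sum_Ico_add']
    simp only [Nat.add_sub_cancel]

theorem stmt13_general (n : ℕ) (ε : ℕ → ℤ)
    (hε : ∀ l, l < n → ε l = 1 ∨ ε l = -1) :
    TB n ε = TA n ε + TA (n - 1) ε := by
  have tail_sq {j : ℕ} (hj : j < n) : (∏ l ∈ Icc j (n - 1), ε l) ^ 2 = 1 :=
    prod_sq_eq_one fun l hl => sq_eq_one_iff.mpr (hε l (by grind))
  rw [TB, TA_pred_eq_sum_Ico_succ]
  congr 1
  refine sum_congr rfl fun i _ => sum_congr rfl fun j hj => ?_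
  rw [tail_sq (mem_Ico.1 hj).2, mul_one]

/-- For the root system `B_n`:
`T_{B_n}({ε_i}) = T_{A_n}({ε_i}) + T_{A_{n-1}}({ε_1,…,ε_{n-1}})`. -/
theorem stmt13 (n : ℕ) (hn : 1 ≤ n) (ε : ℕ → ℤ)
    (hε : ∀ l, l < n → ε l = 1 ∨ ε l = -1) :
    TB n ε = TA n ε + TA (n - 1) ε :=
  stmt13_general n ε hε
end

section
/- Let τ be an involutive automorphism of g with τ(E^α) = ε_α E^{τ(α)}, ε_α ∈ {±1}. If α is a root with α ≠ τ(α) and α + τ(α) is also a root, then ε_{α+τ(α)} = -1. -/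
/-!
Apply `τ` to `⁅E α, E (σ α)⁆ = N α (σ α) • E (α + σ α)`. Since `τ` is a Lie algebra morphism
and `σ` swaps `α` and `σ α`, this gives
`N α (σ α) * ε (α + σ α) = ε α * ε (σ α) * N (σ α) α`. Involutivity of `τ` forces
`ε α * ε (σ α) = 1`, and antisymmetry gives `N (σ α) α = -N α (σ α) ≠ 0`.
-/

section

variable {K M : Type*} [Field K] [AddCommGroup M] [Module K M]

theorem mul_eq_one_of_involutive_swap_smul {τ : M →ₗ[K] M} (hinv : ∀ x, τ (τ x) = x)
    {x y : M} {a b : K} (hx : x ≠ 0) (hτx : τ x = a • y) (hτy : τ y = b • x) :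
    a * b = 1 := by
  have h := hinv x
  rw [hτx, map_smul, hτy, smul_smul, ← one_smul K x, smul_smul, mul_one] at h
  exact smul_left_injective K hx h

end

section

variable {K g V : Type*} [Field K] [LieRing g] [LieAlgebra K g] [AddCommGroup V]
  {Δ : Set V} {E : V → g} {N : V → V → K} {σ : V → V} {ε : V → K} {τ : g →ₗ[K] g}

theorem structureConst_mul_sign_add
    (hE : ∀ α ∈ Δ, E α ≠ 0)
    (hEE : ∀ α ∈ Δ, ∀ β ∈ Δ, α + β ∈ Δ → ⁅E α, E β⁆ = N α β • E (α + β))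
    (hσΔ : ∀ α ∈ Δ, σ α ∈ Δ)
    (hσadd : ∀ α ∈ Δ, ∀ β ∈ Δ, α + β ∈ Δ → σ (α + β) = σ α + σ β)
    (hhom : ∀ x y : g, τ ⁅x, y⁆ = ⁅τ x, τ y⁆) (hτE : ∀ α ∈ Δ, τ (E α) = ε α • E (σ α))
    {α β : V} (hα : α ∈ Δ) (hβ : β ∈ Δ) (hαβ : α + β ∈ Δ) :
    N α β * ε (α + β) = ε α * ε β * N (σ α) (σ β) := by
  have hσαβ : σ α + σ β ∈ Δ := hσadd α hα β hβ hαβ ▸ hσΔ _ hαβ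
  have h := hhom (E α) (E β)
  rw [hEE α hα β hβ hαβ, map_smul, hτE _ hαβ, hτE α hα, hτE β hβ, smul_lie, lie_smul,
    hEE _ (hσΔ α hα) _ (hσΔ β hβ) hσαβ, hσadd α hα β hβ hαβ, smul_smul, smul_smul,
    smul_smul] at h
  exact smul_left_injective K (hE _ hσαβ) h

end

theorem stmt16_general {g : Type*} [LieRing g] [LieAlgebra ℂ g]
    {V : Type*} [AddCommGroup V] (Δ : Set V) (E : V → g)
    (hE : ∀ α ∈ Δ, E α ≠ 0)
    (N : V → V → ℂ)
    (hEE : ∀ α ∈ Δ, ∀ β ∈ Δ, α + β ∈ Δ → ⁅E α, E β⁆ = N α β • E (α + β))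
    (hN : ∀ α ∈ Δ, ∀ β ∈ Δ, α + β ∈ Δ → N α β ≠ 0)
    (hNanti : ∀ α β : V, N α β = -N β α)
    (σ : V → V) (hσΔ : ∀ α ∈ Δ, σ α ∈ Δ) (hσσ : ∀ α ∈ Δ, σ (σ α) = α)
    (hσadd : ∀ α ∈ Δ, ∀ β ∈ Δ, α + β ∈ Δ → σ (α + β) = σ α + σ β)
    (ε : V → ℂ)
    (τ : g →ₗ[ℂ] g) (hhom : ∀ x y : g, τ ⁅x, y⁆ = ⁅τ x, τ y⁆)
    (hτE : ∀ α ∈ Δ, τ (E α) = ε α • E (σ α))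
    (hinv : ∀ x : g, τ (τ x) = x) :
    ∀ α ∈ Δ, σ α ≠ α → α + σ α ∈ Δ → ε (α + σ α) = -1 := by
  intro α hα _ hsum
  have hσα := hσΔ α hα
  have hsign : ε α * ε (σ α) = 1 :=
    mul_eq_one_of_involutive_swap_smul hinv (hE α hα) (hτE α hα) (by rw [hτE _ hσα, hσσ α hα])
  have hrel := structureConst_mul_sign_add hE hEE hσΔ hσadd hhom hτE hα hσα hsum
  rw [hsign, one_mul, hσσ α hα, hNanti (σ α) α] at hrel
  have hN0 := hN α hα (σ α) hσα hsum
  exact mul_left_cancel₀ hN0 (by rw [hrel, mul_neg_one])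

/-- For an involutive automorphism `τ` with `τ (E α) = ε α • E (σ α)` and
structure constants `N` (`⁅E α, E β⁆ = N α β • E (α+β)`, `N α β = -N β α`):
if `α` is a root with `σ α ≠ α` and `α + σ α` also a root, then
`ε (α + σ α) = -1`. -/
theorem stmt16 {g : Type*} [LieRing g] [LieAlgebra ℂ g]
    {V : Type*} [AddCommGroup V] (Δ : Set V) (E : V → g)
    (hE : ∀ α ∈ Δ, E α ≠ 0)
    (N : V → V → ℂ)
    (hEE : ∀ α ∈ Δ, ∀ β ∈ Δ, α + β ∈ Δ → ⁅E α, E β⁆ = N α β • E (α + β))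
    (hN : ∀ α ∈ Δ, ∀ β ∈ Δ, α + β ∈ Δ → N α β ≠ 0)
    (hNanti : ∀ α β : V, N α β = -N β α)
    (σ : V → V) (hσΔ : ∀ α ∈ Δ, σ α ∈ Δ) (hσσ : ∀ α ∈ Δ, σ (σ α) = α)
    (hσadd : ∀ α ∈ Δ, ∀ β ∈ Δ, α + β ∈ Δ → σ (α + β) = σ α + σ β)
    (ε : V → ℂ) (hεpm : ∀ α ∈ Δ, ε α = 1 ∨ ε α = -1)
    (τ : g →ₗ[ℂ] g) (hhom : ∀ x y : g, τ ⁅x, y⁆ = ⁅τ x, τ y⁆)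
    (hτE : ∀ α ∈ Δ, τ (E α) = ε α • E (σ α))
    (hinv : ∀ x : g, τ (τ x) = x) :
    ∀ α ∈ Δ, σ α ≠ α → α + σ α ∈ Δ → ε (α + σ α) = -1 :=
  stmt16_general Δ E hE N hEE hN hNanti σ hσΔ hσσ hσadd ε τ hhom hτE hinv
end

section
/- Let τ be an involutive automorphism of g inducing a root-system automorphism with τ(E^α) = ε_α E^{τ(α)}. Suppose α ≠ τ(α), β = τ(β), and α, β, α+β, τ(α)+β, α+β+τ(α) are all roots while α+τ(α) is not a root. Then ε_{α+β+τ(α)} = ε_β. -/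
/-!
Put `x = ⁅⁅E α, E β⁆, E (σ α)⁆ = N α β * N (α + β) (σ α) • E (α + β + σ α)`, a nonzero vector
since the structure constants of root sums are nonzero. Since `σ` fixes `α + β + σ α`, `τ x` is
`ε (α + β + σ α) • x`. On the other hand `τ` exchanges the lines of `E α` and `E (σ α)`, with
`ε α * ε (σ α) = 1` because `τ` is an involution, and fixes the line of `E β` with factor `ε β`.
As `⁅E α, E (σ α)⁆ = 0` (`α + σ α` is neither a root nor zero), `ad (E α)` and `ad (E (σ α))`
commute, so exchanging them leaves `x` unchanged and `τ x = ε β • x`.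
-/

theorem mul_eq_one_of_involutive_of_map_eq_smul {K M : Type*} [Field K] [AddCommGroup M]
    [Module K M] (τ : M →ₗ[K] M) (hτ : ∀ x, τ (τ x) = x) {x y : M} (hx : x ≠ 0) {c d : K}
    (hxy : τ x = c • y) (hyx : τ y = d • x) : c * d = 1 := by
  refine smul_left_injective K hx ?_
  calc (c * d) • x = τ (τ x) := by rw [hxy, map_smul, hyx, smul_smul]
    _ = (1 : K) • x := by rw [hτ, one_smul]

theorem lie_lie_swap_of_lie_eq_zero {L : Type*} [LieRing L] {a c : L} (hac : ⁅a, c⁆ = 0)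
    (b : L) : ⁅⁅c, b⁆, a⁆ = ⁅⁅a, b⁆, c⁆ := by
  have h := leibniz_lie a c b
  rw [hac, zero_lie, zero_add] at h
  calc ⁅⁅c, b⁆, a⁆ = -⁅a, ⁅c, b⁆⁆ := (lie_skew _ _).symm
    _ = ⁅⁅a, b⁆, c⁆ := by rw [h, lie_skew]

theorem map_lie_lie_eq_smul_of_swap {K L : Type*} [CommRing K] [LieRing L] [LieAlgebra K L]
    (τ : L → L) (hτ : ∀ x y, τ ⁅x, y⁆ = ⁅τ x, τ y⁆) {a b c : L} {p q r : K}
    (ha : τ a = p • c) (hb : τ b = q • b) (hc : τ c = r • a) (hpr : p * r = 1)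
    (hac : ⁅a, c⁆ = 0) : τ ⁅⁅a, b⁆, c⁆ = q • ⁅⁅a, b⁆, c⁆ := by
  rw [hτ, hτ, ha, hb, hc]
  simp only [smul_lie, lie_smul, smul_smul]
  rw [lie_lie_swap_of_lie_eq_zero hac]
  congr 1
  linear_combination q * hpr

theorem stmt17_general {g : Type*} [LieRing g] [LieAlgebra ℂ g]
    {V : Type*} [AddCommGroup V] (Δ : Set V) (E : V → g)
    (hE : ∀ α ∈ Δ, E α ≠ 0)
    (N : V → V → ℂ)
    (hEE : ∀ α ∈ Δ, ∀ β ∈ Δ, α + β ∈ Δ → ⁅E α, E β⁆ = N α β • E (α + β))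
    (hN : ∀ α ∈ Δ, ∀ β ∈ Δ, α + β ∈ Δ → N α β ≠ 0)
    (hEE0 : ∀ α ∈ Δ, ∀ β ∈ Δ, α + β ∉ Δ → α + β ≠ 0 → ⁅E α, E β⁆ = 0)
    (σ : V → V) (hσΔ : ∀ α ∈ Δ, σ α ∈ Δ) (hσσ : ∀ α ∈ Δ, σ (σ α) = α)
    (hσadd : ∀ α ∈ Δ, ∀ β ∈ Δ, α + β ∈ Δ → σ (α + β) = σ α + σ β)
    (ε : V → ℂ)
    (τ : g →ₗ[ℂ] g) (hhom : ∀ x y : g, τ ⁅x, y⁆ = ⁅τ x, τ y⁆)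
    (hτE : ∀ α ∈ Δ, τ (E α) = ε α • E (σ α))
    (hinv : ∀ x : g, τ (τ x) = x) :
    ∀ α ∈ Δ, ∀ β ∈ Δ, σ α ≠ α → σ β = β →
      α + β ∈ Δ → σ α + β ∈ Δ → α + β + σ α ∈ Δ → α + σ α ∉ Δ →
      ε (α + β + σ α) = ε β := by
  intro α hα β hβ _ hβfix hαβ _ hαβσα hnot
  by_cases h0 : α + σ α = 0
  · rw [add_right_comm, h0, zero_add]
  have hσα : σ α ∈ Δ := hσΔ α hα
  have hτσα : τ (E (σ α)) = ε (σ α) • E α := by rw [hτE _ hσα, hσσ α hα]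
  have hεε : ε α * ε (σ α) = 1 :=
    mul_eq_one_of_involutive_of_map_eq_smul τ hinv (hE α hα) (hτE α hα) hτσα
  set x := ⁅⁅E α, E β⁆, E (σ α)⁆ with hx_def
  have hx : x = (N α β * N (α + β) (σ α)) • E (α + β + σ α) := by
    rw [hx_def, hEE α hα β hβ hαβ, smul_lie, hEE _ hαβ _ hσα hαβσα, smul_smul]
  have hx0 : x ≠ 0 := by
    rw [hx]
    exact smul_ne_zero (mul_ne_zero (hN α hα β hβ hαβ) (hN _ hαβ _ hσα hαβσα)) (hE _ hαβσα)
  have hσfix : σ (α + β + σ α) = α + β + σ α := by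
    rw [hσadd _ hαβ _ hσα hαβσα, hσadd α hα β hβ hαβ, hσσ α hα, hβfix]
    abel
  have hτx : τ x = ε (α + β + σ α) • x := by
    rw [hx, map_smul, hτE _ hαβσα, hσfix, smul_comm]
  have hτx' : τ x = ε β • x :=
    map_lie_lie_eq_smul_of_swap τ hhom (hτE α hα) (by rw [hτE β hβ, hβfix]) hτσα hεε
      (hEE0 α hα _ hσα hnot h0)
  exact smul_left_injective ℂ hx0 (hτx.symm.trans hτx')

/-- For an involutive automorphism `τ` with `τ (E α) = ε α • E (σ α)`:
if `α ≠ σ α`, `β = σ β`, the elements `α, β, α+β, σ α + β, α + β + σ α` are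
all roots but `α + σ α` is not a root, then `ε (α + β + σ α) = ε β`. -/
theorem stmt17 {g : Type*} [LieRing g] [LieAlgebra ℂ g]
    {V : Type*} [AddCommGroup V] (Δ : Set V) (E : V → g)
    (hE : ∀ α ∈ Δ, E α ≠ 0)
    (N : V → V → ℂ)
    (hEE : ∀ α ∈ Δ, ∀ β ∈ Δ, α + β ∈ Δ → ⁅E α, E β⁆ = N α β • E (α + β))
    (hN : ∀ α ∈ Δ, ∀ β ∈ Δ, α + β ∈ Δ → N α β ≠ 0)
    (hNanti : ∀ α β : V, N α β = -N β α)
    (hEE0 : ∀ α ∈ Δ, ∀ β ∈ Δ, α + β ∉ Δ → α + β ≠ 0 → ⁅E α, E β⁆ = 0)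
    (σ : V → V) (hσΔ : ∀ α ∈ Δ, σ α ∈ Δ) (hσσ : ∀ α ∈ Δ, σ (σ α) = α)
    (hσadd : ∀ α ∈ Δ, ∀ β ∈ Δ, α + β ∈ Δ → σ (α + β) = σ α + σ β)
    (ε : V → ℂ) (hεpm : ∀ α ∈ Δ, ε α = 1 ∨ ε α = -1)
    (τ : g →ₗ[ℂ] g) (hhom : ∀ x y : g, τ ⁅x, y⁆ = ⁅τ x, τ y⁆)
    (hτE : ∀ α ∈ Δ, τ (E α) = ε α • E (σ α))
    (hinv : ∀ x : g, τ (τ x) = x) :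
    ∀ α ∈ Δ, ∀ β ∈ Δ, σ α ≠ α → σ β = β →
      α + β ∈ Δ → σ α + β ∈ Δ → α + β + σ α ∈ Δ → α + σ α ∉ Δ →
      ε (α + β + σ α) = ε β :=
  stmt17_general Δ E hE N hEE hN hEE0 σ hσΔ hσσ hσadd ε τ hhom hτE hinv
end
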